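/- arXiv:2512.19966 — 3 statements merged into one kernel-verified Lean document; each statement's English description precedes it below -/
import Mathlib

section
/- Let f_n: ℝ^d → ℝ be convex differentiable functions converging pointwise to a convex differentiable function f on ℝ^d. Then ∇f_n converges to ∇f uniformly on every compact subset of ℝ^d. -/
/-!
In finite dimensions, pointwise convergence of convex functions is locally uniform with locally
uniformly bounded derivatives: near a point the functions are bounded above by their values at the
vertices of a surrounding simplex, below by reflection through the point, and a convex function
bounded on a ball of radius `r` has derivative of norm at most its oscillation there over `r`.
So along the sequence the derivatives at nearby points stay in a compact set, and passing to the
limit in the subgradient inequality shows that every cluster value is a subgradient of the limit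
function at the point, i.e. its derivative there.
-/

open Set Filter Metric Topology

section NormedSpace

variable {E : Type*} [NormedAddCommGroup E] [NormedSpace ℝ E] {f : E → ℝ} {s : Set E} {x y : E}

theorem ConvexOn.fderiv_apply_sub_le (hf : ConvexOn ℝ s f) (hx : x ∈ s) (hy : y ∈ s)
    (hd : DifferentiableAt ℝ f x) : fderiv ℝ f x (y - x) ≤ f y - f x := by
  let γ : ℝ →ᵃ[ℝ] E := AffineMap.lineMap x y
  have hφ : HasDerivAt (f ∘ γ) (fderiv ℝ f x (y - x)) 0 := by
    refine HasFDerivAt.comp_hasDerivAt (0 : ℝ) ?_ AffineMap.hasDerivAt_lineMap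
    simpa [γ] using hd.hasFDerivAt
  have h := (hf.comp_affineMap γ).deriv_le_slope (by simpa [γ] using hx) (by simpa [γ] using hy)
    one_pos hφ.differentiableAt
  simpa [hφ.deriv, slope, γ] using h

theorem DifferentiableAt.fderiv_eq_of_eventually_add_apply_sub_le (hd : DifferentiableAt ℝ f x)
    {φ : StrongDual ℝ E} (h : ∀ᶠ y in 𝓝 x, f x + φ (y - x) ≤ f y) : fderiv ℝ f x = φ := by
  have hmin : IsLocalMin (fun y => f y - φ y) x := by
    filter_upwards [h] with y hy
    simp only [map_sub] at hy
    linarith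
  exact sub_eq_zero.mp (hmin.hasFDerivAt_eq_zero (hd.hasFDerivAt.sub φ.hasFDerivAt))

theorem ConvexOn.norm_fderiv_le {r C : ℝ} (hf : ConvexOn ℝ (closedBall x r) f)
    (hd : DifferentiableAt ℝ f x) (hr : 0 < r) (hC : ∀ y ∈ closedBall x r, f y ≤ C) :
    ‖fderiv ℝ f x‖ ≤ (C - f x) / r := by
  have hxr : x ∈ closedBall x r := mem_closedBall_self hr.le
  have happly : ∀ u ∈ closedBall (0 : E) r, fderiv ℝ f x u ≤ C - f x := fun u hu => by
    have hu' : x + u ∈ closedBall x r := by simpa using hu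
    have := hf.fderiv_apply_sub_le hxr hu' hd
    rw [add_sub_cancel_left] at this
    linarith [hC _ hu']
  refine ContinuousLinearMap.opNorm_bound_of_ball_bound hr _ _ fun u hu => ?_
  have hneg : -u ∈ closedBall (0 : E) r := by simpa using hu
  rw [Real.norm_eq_abs, abs_le]
  constructor
  · linarith [happly _ hneg, map_neg (fderiv ℝ f x) u]
  · exact happly u hu

theorem ConvexOn.abs_sub_le_of_norm_fderiv_le {L : ℝ} (hf : ConvexOn ℝ s f) (hx : x ∈ s)
    (hy : y ∈ s) (hdx : DifferentiableAt ℝ f x) (hdy : DifferentiableAt ℝ f y)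
    (hLx : ‖fderiv ℝ f x‖ ≤ L) (hLy : ‖fderiv ℝ f y‖ ≤ L) : |f x - f y| ≤ L * ‖x - y‖ := by
  have hx' := hf.fderiv_apply_sub_le hx hy hdx
  have hy' := hf.fderiv_apply_sub_le hy hx hdy
  have hbx : |fderiv ℝ f x (y - x)| ≤ L * ‖x - y‖ := by
    rw [← Real.norm_eq_abs, norm_sub_rev x y]
    exact (fderiv ℝ f x).le_of_opNorm_le hLx _
  have hby : |fderiv ℝ f y (x - y)| ≤ L * ‖x - y‖ := by
    rw [← Real.norm_eq_abs]
    exact (fderiv ℝ f y).le_of_opNorm_le hLy _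
  rw [abs_le]
  constructor <;> linarith [neg_le_of_abs_le hbx, neg_le_of_abs_le hby]

end NormedSpace

section FiniteDimensional

variable {E : Type*} [NormedAddCommGroup E] [NormedSpace ℝ E] [FiniteDimensional ℝ E]
  {ι : Type*} {l : Filter ι} {f : ι → E → ℝ} {g : E → ℝ}

theorem exists_eventually_forall_closedBall_le (hf : ∀ i, ConvexOn ℝ univ (f i))
    (hfg : ∀ x, Tendsto (fun i => f i x) l (𝓝 (g x))) (a : E) :
    ∃ r > 0, ∃ C, ∀ᶠ i in l, ∀ y ∈ closedBall a r, f i y ≤ C := by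
  obtain ⟨b, hab, -⟩ := exists_mem_interior_convexHull_affineBasis (univ_mem : univ ∈ 𝓝 a)
  obtain ⟨r, hr, hball⟩ := Metric.isOpen_iff.mp isOpen_interior a hab
  obtain ⟨C, hC⟩ := Finite.exists_le fun j => g (b j)
  have hvertices : ∀ᶠ i in l, ∀ j, f i (b j) ≤ C + 1 := eventually_all.mpr fun j =>
    (hfg (b j)).eventually (eventually_le_nhds (by linarith [hC j]))
  refine ⟨r / 2, by positivity, C + 1, ?_⟩
  filter_upwards [hvertices] with i hi y hy
  have hy : y ∈ convexHull ℝ (range b) :=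
    interior_subset (hball (closedBall_subset_ball (by linarith) hy))
  obtain ⟨_, ⟨j, rfl⟩, hle⟩ := (hf i).exists_ge_of_mem_convexHull (subset_univ _) hy
  exact hle.trans (hi j)

theorem exists_eventually_forall_closedBall_abs_le (hf : ∀ i, ConvexOn ℝ univ (f i))
    (hfg : ∀ x, Tendsto (fun i => f i x) l (𝓝 (g x))) (a : E) :
    ∃ r > 0, ∃ C, ∀ᶠ i in l, ∀ y ∈ closedBall a r, |f i y| ≤ C := by
  obtain ⟨r, hr, C, hC⟩ := exists_eventually_forall_closedBall_le hf hfg a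
  have hcenter : ∀ᶠ i in l, g a - 1 ≤ f i a :=
    (hfg a).eventually (eventually_ge_nhds (by linarith))
  refine ⟨r, hr, max C (C - 2 * (g a - 1)), ?_⟩
  filter_upwards [hC, hcenter] with i hi hia y hy
  have hrefl : (2 : ℝ) • a - y ∈ closedBall a r := by
    rw [mem_closedBall, dist_eq_norm, show (2 : ℝ) • a - y - a = -(y - a) by module, norm_neg,
      ← dist_eq_norm]
    exact hy
  have hmid := (hf i).2 (mem_univ y) (mem_univ ((2 : ℝ) • a - y)) (by norm_num : (0 : ℝ) ≤ 1 / 2)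
    (by norm_num : (0 : ℝ) ≤ 1 / 2) (by norm_num)
  rw [show (1 / 2 : ℝ) • y + (1 / 2 : ℝ) • ((2 : ℝ) • a - y) = a by module, smul_eq_mul,
    smul_eq_mul] at hmid
  rw [abs_le]
  constructor
  · linarith [le_max_right C (C - 2 * (g a - 1)), hi _ hrefl]
  · exact (hi y hy).trans (le_max_left _ _)

theorem exists_eventually_forall_closedBall_norm_fderiv_le (hf : ∀ i, ConvexOn ℝ univ (f i))
    (hdf : ∀ i, Differentiable ℝ (f i)) (hfg : ∀ x, Tendsto (fun i => f i x) l (𝓝 (g x)))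
    (a : E) : ∃ r > 0, ∃ L, ∀ᶠ i in l, ∀ y ∈ closedBall a r, ‖fderiv ℝ (f i) y‖ ≤ L := by
  obtain ⟨r, hr, C, hC⟩ := exists_eventually_forall_closedBall_abs_le hf hfg a
  refine ⟨r / 2, by positivity, (C + C) / (r / 2), ?_⟩
  filter_upwards [hC] with i hi y hy
  have hsub : closedBall y (r / 2) ⊆ closedBall a r :=
    closedBall_subset_closedBall' (by rw [mem_closedBall] at hy; linarith)
  have hyr : y ∈ closedBall a r := hsub (mem_closedBall_self (by positivity))
  refine ((hf i).subset (subset_univ _) (convex_closedBall y _)).norm_fderiv_le (hdf i y)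
    (by positivity) (fun z hz => (abs_le.mp (hi z (hsub hz))).2) |>.trans ?_
  gcongr
  linarith [(abs_le.mp (hi y hyr)).1]

theorem tendsto_uncurry_of_convexOn (hf : ∀ i, ConvexOn ℝ univ (f i))
    (hdf : ∀ i, Differentiable ℝ (f i)) (hfg : ∀ x, Tendsto (fun i => f i x) l (𝓝 (g x)))
    (a : E) : Tendsto (fun q : ι × E => f q.1 q.2) (l ×ˢ 𝓝 a) (𝓝 (g a)) := by
  obtain ⟨r, hr, L, hL⟩ := exists_eventually_forall_closedBall_norm_fderiv_le hf hdf hfg a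
  have hnear : ∀ᶠ q in l ×ˢ 𝓝 a, ‖f q.1 q.2 - f q.1 a‖ ≤ L * ‖q.2 - a‖ := by
    filter_upwards [hL.prod_mk (closedBall_mem_nhds a hr)] with ⟨i, y⟩ ⟨hi, hy⟩
    exact (hf i).abs_sub_le_of_norm_fderiv_le (mem_univ y) (mem_univ a) (hdf i y) (hdf i a)
      (hi y hy) (hi a (mem_closedBall_self hr.le))
  have hsnd : Tendsto (fun q : ι × E => L * ‖q.2 - a‖) (l ×ˢ 𝓝 a) (𝓝 0) := by
    simpa using ((tendsto_snd (f := l) (g := 𝓝 a)).sub_const a).norm.const_mul L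
  simpa using (squeeze_zero_norm' hnear hsnd).add ((hfg a).comp tendsto_fst)

theorem tendsto_fderiv_uncurry_of_convexOn (hf : ∀ i, ConvexOn ℝ univ (f i))
    (hdf : ∀ i, Differentiable ℝ (f i)) (hfg : ∀ x, Tendsto (fun i => f i x) l (𝓝 (g x)))
    {a : E} (hg : DifferentiableAt ℝ g a) :
    Tendsto (fun q : ι × E => fderiv ℝ (f q.1) q.2) (l ×ˢ 𝓝 a) (𝓝 (fderiv ℝ g a)) := by
  obtain ⟨r, hr, L, hL⟩ := exists_eventually_forall_closedBall_norm_fderiv_le hf hdf hfg a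
  have hbounded : ∀ᶠ q in l ×ˢ 𝓝 a, fderiv ℝ (f q.1) q.2 ∈ closedBall 0 L := by
    filter_upwards [hL.prod_mk (closedBall_mem_nhds a hr)] with ⟨i, y⟩ ⟨hi, hy⟩
    simpa using hi y hy
  refine (isCompact_closedBall 0 L).tendsto_nhds_of_unique_mapClusterPt hbounded
    fun φ _ hφ => ?_
  obtain ⟨U, hU, hφU⟩ := mapClusterPt_iff_ultrafilter.mp hφ
  have hfst : Tendsto Prod.fst (U : Filter (ι × E)) l := tendsto_fst.mono_left hU
  have hsnd : Tendsto Prod.snd (U : Filter (ι × E)) (𝓝 a) := tendsto_snd.mono_left hU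
  refine (hg.fderiv_eq_of_eventually_add_apply_sub_le (Eventually.of_forall fun y => ?_)).symm
  have hlhs : Tendsto (fun q : ι × E => fderiv ℝ (f q.1) q.2 (y - q.2)) U (𝓝 (φ (y - a))) :=
    (isBoundedBilinearMap_apply.continuous.tendsto (φ, y - a)).comp
      (hφU.prodMk_nhds (tendsto_const_nhds.sub hsnd))
  have hrhs : Tendsto (fun q : ι × E => f q.1 y - f q.1 q.2) U (𝓝 (g y - g a)) :=
    ((hfg y).comp hfst).sub ((tendsto_uncurry_of_convexOn hf hdf hfg a).mono_left hU)
  have := le_of_tendsto_of_tendsto hlhs hrhs (Eventually.of_forall fun q =>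
    (hf q.1).fderiv_apply_sub_le (mem_univ _) (mem_univ y) (hdf q.1 q.2))
  linarith

theorem tendstoLocallyUniformly_fderiv_of_convexOn (hf : ∀ i, ConvexOn ℝ univ (f i))
    (hdf : ∀ i, Differentiable ℝ (f i)) (hg : ConvexOn ℝ univ g) (hdg : Differentiable ℝ g)
    (hfg : ∀ x, Tendsto (fun i => f i x) l (𝓝 (g x))) :
    TendstoLocallyUniformly (fun i => fderiv ℝ (f i)) (fderiv ℝ g) l := by
  rw [tendstoLocallyUniformly_iff_forall_tendsto]
  intro a
  have hcont : Tendsto (fun q : ι × E => fderiv ℝ g q.2) (l ×ˢ 𝓝 a) (𝓝 (fderiv ℝ g a)) :=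
    tendsto_fderiv_uncurry_of_convexOn (fun _ => hg) (fun _ => hdg)
      (fun _ => tendsto_const_nhds) (hdg a)
  exact (hcont.prodMk_nhds (tendsto_fderiv_uncurry_of_convexOn hf hdf hfg (hdg a))).mono_right
    (nhds_le_uniformity _)

end FiniteDimensional

theorem tendstoLocallyUniformly_gradient_of_convexOn {E : Type*} [NormedAddCommGroup E]
    [InnerProductSpace ℝ E] [FiniteDimensional ℝ E] {ι : Type*} {l : Filter ι}
    {f : ι → E → ℝ} {g : E → ℝ} (hf : ∀ i, ConvexOn ℝ univ (f i))
    (hdf : ∀ i, Differentiable ℝ (f i)) (hg : ConvexOn ℝ univ g) (hdg : Differentiable ℝ g)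
    (hfg : ∀ x, Tendsto (fun i => f i x) l (𝓝 (g x))) :
    TendstoLocallyUniformly (fun i => gradient (f i)) (gradient g) l :=
  (InnerProductSpace.toDual ℝ E).symm.isometry.uniformContinuous.comp_tendstoLocallyUniformly
    (tendstoLocallyUniformly_fderiv_of_convexOn hf hdf hg hdg hfg)

theorem stmt12 {d : ℕ} (f : ℕ → EuclideanSpace ℝ (Fin d) → ℝ)
    (g : EuclideanSpace ℝ (Fin d) → ℝ)
    (hconv : ∀ n, ConvexOn ℝ Set.univ (f n)) (hgconv : ConvexOn ℝ Set.univ g)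
    (hdiff : ∀ n, Differentiable ℝ (f n)) (hgdiff : Differentiable ℝ g)
    (hpt : ∀ x, Filter.Tendsto (fun n => f n x) Filter.atTop (nhds (g x))) :
    ∀ K : Set (EuclideanSpace ℝ (Fin d)), IsCompact K →
      TendstoUniformlyOn (fun n => gradient (f n)) (gradient g) Filter.atTop K :=
  tendstoLocallyUniformly_iff_forall_isCompact.mp
    (tendstoLocallyUniformly_gradient_of_convexOn hconv hdiff hgconv hgdiff hpt)
end

section
/- Let g ∈ C[0,1] and define the directional derivative candidate I'_g(h) = ∫_{B₊(g)} h(p) dp + ∫_{B₀(g)} max(h(p), 0) dp, where B₀(g) = {p : g(p) = 0} and B₊(g) = {p : g(p) > 0}. For the functional I(h) = ∫₀¹ max(h(p),0) dp and for any sequences t_n → 0⁺ and h_n → h uniformly in C[0,1], one has (I(g + t_n h_n) - I(g))/t_n → I'_g(h). -/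
open MeasureTheory

theorem stmt16 (g h : ℝ → ℝ) (hg : ContinuousOn g (Set.Icc 0 1))
    (hh : ContinuousOn h (Set.Icc 0 1))
    (t : ℕ → ℝ) (ht : ∀ n, 0 < t n)
    (ht0 : Filter.Tendsto t Filter.atTop (nhds 0))
    (hn : ℕ → ℝ → ℝ) (hhn : ∀ n, ContinuousOn (hn n) (Set.Icc 0 1))
    (hunif : TendstoUniformlyOn hn h Filter.atTop (Set.Icc 0 1)) :
    Filter.Tendsto (fun n =>
        ((∫ p in Set.Icc (0 : ℝ) 1, max (g p + t n * hn n p) 0) -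
          ∫ p in Set.Icc (0 : ℝ) 1, max (g p) 0) / t n) Filter.atTop
      (nhds ((∫ p in {p ∈ Set.Icc (0 : ℝ) 1 | 0 < g p}, h p) +
        ∫ p in {p ∈ Set.Icc (0 : ℝ) 1 | g p = 0}, max (h p) 0)) := by
  classical
  set I : Set ℝ := Set.Icc (0 : ℝ) 1 with hI
  set μ : Measure ℝ := volume.restrict I with hμdef
  set Sp : Set ℝ := {p ∈ I | 0 < g p} with hSpdef
  set Sm : Set ℝ := {p ∈ I | g p < 0} with hSmdef
  set S0 : Set ℝ := {p ∈ I | g p = 0} with hS0def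
  -- measurability of the sets
  obtain ⟨U, hUo, hUeq⟩ := continuousOn_iff'.mp hg (Set.Ioi 0) isOpen_Ioi
  obtain ⟨V, hVo, hVeq⟩ := continuousOn_iff'.mp hg (Set.Iio 0) isOpen_Iio
  have hSpU : Sp = U ∩ I := by
    rw [hSpdef, ← hUeq]; ext p; simp [Set.mem_sep_iff, Set.mem_preimage, and_comm]
  have hSmV : Sm = V ∩ I := by
    rw [hSmdef, ← hVeq]; ext p; simp [Set.mem_sep_iff, Set.mem_preimage, and_comm]
  have hSp : MeasurableSet Sp := by
    rw [hSpU]; exact hUo.measurableSet.inter measurableSet_Icc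
  have hSm : MeasurableSet Sm := by
    rw [hSmV]; exact hVo.measurableSet.inter measurableSet_Icc
  have hS0eq : S0 = I \ (Sp ∪ Sm) := by
    ext p
    simp only [hS0def, hSpdef, hSmdef, Set.mem_sep_iff, Set.mem_diff, Set.mem_union]
    constructor
    · rintro ⟨hpI, hp0⟩
      exact ⟨hpI, by simp [hp0]⟩
    · rintro ⟨hpI, hp2⟩
      push_neg at hp2
      exact ⟨hpI, le_antisymm (hp2.1 hpI) (hp2.2 hpI)⟩
  have hS0 : MeasurableSet S0 := by
    rw [hS0eq]; exact measurableSet_Icc.diff (hSp.union hSm)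
  -- integrability of h and max h 0 on I
  have hInt_h : IntegrableOn h I := hh.integrableOn_Icc
  have hInt_maxh : IntegrableOn (fun p => max (h p) 0) I :=
    (hh.sup continuousOn_const).integrableOn_Icc
  -- the pointwise limit function
  set f : ℝ → ℝ := fun p => Sp.indicator h p + S0.indicator (fun q => max (h q) 0) p with hfdef
  -- the target equals ∫ f dμ
  have htarget : (∫ p in Sp, h p) + ∫ p in S0, max (h p) 0 = ∫ p, f p ∂μ := by
    rw [hfdef]
    rw [integral_add (hInt_h.indicator hSp) (hInt_maxh.indicator hS0)]
    rw [integral_indicator hSp, integral_indicator hS0]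
    rw [Measure.restrict_restrict hSp, Measure.restrict_restrict hS0]
    rw [Set.inter_eq_left.mpr (Set.sep_subset _ _), Set.inter_eq_left.mpr (Set.sep_subset _ _)]
  rw [htarget]
  -- uniform bound
  obtain ⟨M, hM⟩ := isCompact_Icc.exists_bound_of_continuousOn hh
  -- dominated convergence
  have hdct : Filter.Tendsto
      (fun n => ∫ p, (max (g p + t n * hn n p) 0 - max (g p) 0) / t n ∂μ)
      Filter.atTop (nhds (∫ p, f p ∂μ)) := by
    apply tendsto_integral_filter_of_dominated_convergence (fun _ => M + 1)
    · -- measurability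
      apply Filter.Eventually.of_forall
      intro n
      have hc : ContinuousOn (fun p => (max (g p + t n * hn n p) 0 - max (g p) 0) / t n) I := by
        apply ContinuousOn.div_const
        exact ((hg.add (continuousOn_const.mul (hhn n))).sup continuousOn_const).sub
          (hg.sup continuousOn_const)
      exact hc.aestronglyMeasurable measurableSet_Icc
    · -- bound
      have h1 : ∀ᶠ n in Filter.atTop, ∀ x ∈ I, dist (h x) (hn n x) < 1 :=
        Metric.tendstoUniformlyOn_iff.mp hunif 1 one_pos
      filter_upwards [h1] with n hn1
      filter_upwards [ae_restrict_mem measurableSet_Icc] with p hp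
      have key : |max (g p + t n * hn n p) 0 - max (g p) 0| ≤ |t n * hn n p| := by
        calc |max (g p + t n * hn n p) 0 - max (g p) 0| ≤ |(g p + t n * hn n p) - g p| :=
              abs_max_sub_max_le_abs _ _ _
          _ = |t n * hn n p| := by ring_nf
      have htn : (0:ℝ) < t n := ht n
      rw [Real.norm_eq_abs, abs_div, abs_of_pos htn]
      rw [div_le_iff₀ htn]
      calc |max (g p + t n * hn n p) 0 - max (g p) 0| ≤ |t n * hn n p| := key
        _ = t n * |hn n p| := by rw [abs_mul, abs_of_pos htn]
        _ ≤ t n * (M + 1) := by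
            apply mul_le_mul_of_nonneg_left _ htn.le
            have : |hn n p - h p| < 1 := by
              have := hn1 p hp; rwa [dist_comm, Real.dist_eq] at this
            calc |hn n p| ≤ |h p| + |hn n p - h p| := by
                  have := abs_sub_abs_le_abs_sub (hn n p) (h p)
                  nlinarith [abs_nonneg (hn n p - h p), abs_sub_comm (hn n p) (h p)]
              _ ≤ M + 1 := by
                  have := hM p hp; rw [Real.norm_eq_abs] at this; linarith
        _ = (M + 1) * t n := by ring
    · exact integrable_const _
    · -- pointwise limit
      filter_upwards [ae_restrict_mem measurableSet_Icc] with p hp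
      have hpt : Filter.Tendsto (fun n => hn n p) Filter.atTop (nhds (h p)) :=
        hunif.tendsto_at hp
      have hx : Filter.Tendsto (fun n => g p + t n * hn n p) Filter.atTop (nhds (g p)) := by
        have h2 : Filter.Tendsto (fun n => t n * hn n p) Filter.atTop (nhds 0) := by
          simpa using ht0.mul hpt
        simpa using tendsto_const_nhds.add h2
      rcases lt_trichotomy (g p) 0 with hgp | hgp | hgp
      · -- g p < 0 : limit is 0
        have hfp : f p = 0 := by
          simp [hfdef, Set.indicator_apply, hSpdef, hS0def, hgp.not_gt, hgp.ne]
        rw [hfp]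
        have hev : ∀ᶠ n in Filter.atTop, g p + t n * hn n p < 0 :=
          hx.eventually (eventually_lt_nhds hgp)
        apply Filter.Tendsto.congr' _ tendsto_const_nhds
        filter_upwards [hev] with n hlt
        rw [max_eq_right hlt.le, max_eq_right hgp.le, sub_zero, zero_div]
      · -- g p = 0 : limit is max (h p) 0
        have hfp : f p = max (h p) 0 := by
          simp [hfdef, Set.indicator_apply, hSpdef, hS0def, hgp, hp, lt_irrefl]
        rw [hfp]
        have heq : ∀ n, (max (g p + t n * hn n p) 0 - max (g p) 0) / t n = max (hn n p) 0 := by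
          intro n
          rw [hgp, zero_add, max_self, sub_zero]
          rw [show max (t n * hn n p) 0 = t n * max (hn n p) 0 by
            rw [mul_max_of_nonneg _ _ (ht n).le, mul_zero]]
          exact mul_div_cancel_left₀ _ (ht n).ne'
        simp_rw [heq]
        exact hpt.max tendsto_const_nhds
      · -- g p > 0 : limit is h p
        have hfp : f p = h p := by
          simp [hfdef, Set.indicator_apply, hSpdef, hS0def, hgp, hp, hgp.ne']
        rw [hfp]
        have hev : ∀ᶠ n in Filter.atTop, 0 < g p + t n * hn n p :=
          hx.eventually (eventually_gt_nhds hgp)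
        apply Filter.Tendsto.congr' _ hpt
        filter_upwards [hev] with n hlt
        rw [max_eq_left hlt.le, max_eq_left hgp.le, add_sub_cancel_left,
          mul_div_cancel_left₀ _ (ht n).ne']
  -- rewrite the difference quotient as a single integral
  apply hdct.congr
  intro n
  have hint1 : IntegrableOn (fun p => max (g p + t n * hn n p) 0) I :=
    ((hg.add (continuousOn_const.mul (hhn n))).sup continuousOn_const).integrableOn_Icc
  have hint2 : IntegrableOn (fun p => max (g p) 0) I :=
    (hg.sup continuousOn_const).integrableOn_Icc
  rw [← integral_sub hint1 hint2, ← integral_div]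
end

section
/- Let g ∈ C[0,1] and Ψ(g) = argmax_{p∈[0,1]} g(p) (nonempty by compactness and continuity). For the functional S(h) = max_{p∈[0,1]} h(p) and any sequences t_n → 0⁺, h_n → h uniformly, one has (S(g + t_n h_n) - S(g))/t_n → sup_{p ∈ Ψ(g)} h(p). -/
/-!
Write `M = max g` and `L = max_{Ψ(g)} h`. The lower bound is immediate: at a point `p ∈ Ψ(g)`
with `h p = L` the perturbed maximum is at least `M + t hₙ(p)`. For the upper bound, the points
where `h ≥ L + ε` form a compact set disjoint from `Ψ(g)`, so `g` stays below `M` there by a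
fixed gap, which dominates `t h` once `t` is small; elsewhere `g + t h ≤ M + t (L + ε)` trivially.
Uniform convergence `hₙ → h` then transfers the bound from `h` to `hₙ`.
-/

open Set Filter Topology

lemma TendstoUniformlyOn.eventually_forall_le_add {ι X : Type*} {l : Filter ι} {K : Set X}
    {F : ι → X → ℝ} {h : X → ℝ} (hF : TendstoUniformlyOn F h l K) {ε : ℝ} (hε : 0 < ε) :
    ∀ᶠ i in l, ∀ x ∈ K, F i x ≤ h x + ε := by
  filter_upwards [Metric.tendstoUniformlyOn_iff.1 hF ε hε] with i hi x hx
  linarith [(abs_lt.1 (Real.dist_eq _ _ ▸ hi x hx)).1]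

variable {X : Type*} [TopologicalSpace X] {K : Set X} {g h : X → ℝ} {M L : ℝ}

lemma eventually_forall_add_mul_le (hK : IsCompact K) (hg : ContinuousOn g K)
    (hh : ContinuousOn h K) (hgM : ∀ x ∈ K, g x ≤ M) (hhL : ∀ x ∈ K, g x = M → h x ≤ L)
    {ε : ℝ} (hε : 0 < ε) :
    ∀ᶠ t in 𝓝[≥] 0, ∀ x ∈ K, g x + t * h x ≤ M + t * (L + ε) := by
  set A := K ∩ h ⁻¹' Ici (L + ε)
  have hA : IsCompact A := hh.upperSemicontinuousOn.isCompact_inter_preimage_Ici hK _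
  obtain ⟨m, hmM, hgm⟩ : ∃ m < M, ∀ x ∈ A, g x ≤ m := by
    have hlt : ∀ x ∈ A, -M < -g x := fun x hx =>
      neg_lt_neg <| (hgM x hx.1).lt_of_ne fun hgx => by
        linarith [hhL x hx.1 hgx, show L + ε ≤ h x from hx.2]
    obtain ⟨a, hMa, hag⟩ := hA.exists_forall_le' (hg.mono inter_subset_left).neg hlt
    exact ⟨-a, by linarith, fun x hx => le_neg.1 (hag x hx)⟩
  obtain ⟨B, hB⟩ := hK.bddAbove_image hh
  have hsmall : ∀ᶠ t in 𝓝[≥] (0 : ℝ), t * (B - (L + ε)) < M - m := by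
    have : Tendsto (fun t : ℝ => t * (B - (L + ε))) (𝓝 0) (𝓝 0) := by
      simpa using (continuous_mul_const (B - (L + ε))).tendsto 0
    exact (this.eventually (gt_mem_nhds (sub_pos.2 hmM))).filter_mono nhdsWithin_le_nhds
  filter_upwards [self_mem_nhdsWithin, hsmall] with t (ht : 0 ≤ t) hts x hx
  by_cases hxA : x ∈ A
  · nlinarith [hgm x hxA, mul_le_mul_of_nonneg_left (hB ⟨x, hx, rfl⟩) ht]
  · have hhx : h x ≤ L + ε := le_of_lt <| not_le.1 fun hle => hxA ⟨hx, hle⟩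
    nlinarith [hgM x hx, mul_le_mul_of_nonneg_left hhx ht]

lemma isCompact_sep_eq_of_forall_le (hK : IsCompact K) (hg : ContinuousOn g K)
    (hgM : ∀ x ∈ K, g x ≤ M) : IsCompact {x ∈ K | g x = M} := by
  have : {x ∈ K | g x = M} = K ∩ g ⁻¹' Ici M := by
    ext x
    exact and_congr_right fun hx => ⟨fun h => h.ge, fun h => le_antisymm (hgM x hx) h⟩
  exact this ▸ hg.upperSemicontinuousOn.isCompact_inter_preimage_Ici hK M

variable {ι : Type*} {l : Filter ι} {t : ι → ℝ} {F : ι → X → ℝ}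

lemma eventually_lt_div_sSup_image_add_mul_sub (hK : IsCompact K) (hh : ContinuousOn h K)
    (hgM : ∀ x ∈ K, g x ≤ M) {p : X} (hpK : p ∈ K) (hpM : g p = M) (ht : ∀ i, 0 < t i)
    (hF : TendstoUniformlyOn F h l K) {a : ℝ} (ha : a < h p) :
    ∀ᶠ i in l, a < (sSup ((fun x => g x + t i * F i x) '' K) - M) / t i := by
  obtain ⟨B, hB⟩ := hK.bddAbove_image hh
  filter_upwards [(hF.tendsto_at hpK).eventually (lt_mem_nhds ha),
    hF.eventually_forall_le_add one_pos] with i hai hFi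
  have hbdd : BddAbove ((fun x => g x + t i * F i x) '' K) := by
    refine ⟨M + t i * (B + 1), forall_mem_image.2 fun x hx => ?_⟩
    have : F i x ≤ B + 1 := (hFi x hx).trans (by linarith [hB ⟨x, hx, rfl⟩])
    nlinarith [hgM x hx, mul_le_mul_of_nonneg_left this (ht i).le]
  have hS : M + t i * F i p ≤ sSup ((fun x => g x + t i * F i x) '' K) :=
    hpM ▸ le_csSup hbdd ⟨p, hpK, rfl⟩
  rw [lt_div_iff₀ (ht i)]
  nlinarith [ht i]

lemma eventually_div_sSup_image_add_mul_sub_lt (hK : IsCompact K) (hne : K.Nonempty)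
    (hg : ContinuousOn g K) (hh : ContinuousOn h K) (hgM : ∀ x ∈ K, g x ≤ M)
    (hhL : ∀ x ∈ K, g x = M → h x ≤ L) (ht : ∀ i, 0 < t i) (ht0 : Tendsto t l (𝓝 0))
    (hF : TendstoUniformlyOn F h l K) {b : ℝ} (hb : L < b) :
    ∀ᶠ i in l, (sSup ((fun x => g x + t i * F i x) '' K) - M) / t i < b := by
  obtain ⟨ε, hε, hεb⟩ : ∃ ε > 0, L + 2 * ε < b := ⟨(b - L) / 3, by linarith, by linarith⟩
  have htw : Tendsto t l (𝓝[≥] 0) :=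
    tendsto_nhdsWithin_iff.2 ⟨ht0, Eventually.of_forall fun i => (ht i).le⟩
  filter_upwards [htw.eventually (eventually_forall_add_mul_le hK hg hh hgM hhL hε),
    hF.eventually_forall_le_add hε] with i hi hFi
  have hS : sSup ((fun x => g x + t i * F i x) '' K) ≤ M + t i * (L + 2 * ε) := by
    refine csSup_le (hne.image _) (forall_mem_image.2 fun x hx => ?_)
    nlinarith [hi x hx, mul_le_mul_of_nonneg_left (hFi x hx) (ht i).le]
  have : t i * (L + 2 * ε) < t i * b := mul_lt_mul_of_pos_left hεb (ht i)
  rw [div_lt_iff₀ (ht i)]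
  linarith

theorem IsCompact.tendsto_sSup_image_add_mul_sub_div (hK : IsCompact K) (hne : K.Nonempty)
    (hg : ContinuousOn g K) (hh : ContinuousOn h K) (ht : ∀ i, 0 < t i)
    (ht0 : Tendsto t l (𝓝 0)) (hF : TendstoUniformlyOn F h l K) :
    Tendsto (fun i => (sSup ((fun x => g x + t i * F i x) '' K) - sSup (g '' K)) / t i) l
      (𝓝 (sSup (h '' {x ∈ K | g x = sSup (g '' K)}))) := by
  obtain ⟨x₀, hx₀, hM, hgM⟩ := hK.exists_sSup_image_eq_and_ge hne hg
  rw [← hM] at hgM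
  obtain ⟨p, ⟨hpK, hpM⟩, hL, hpmax⟩ :=
    (isCompact_sep_eq_of_forall_le hK hg hgM).exists_sSup_image_eq_and_ge ⟨x₀, hx₀, hM.symm⟩
      (hh.mono fun x hx => hx.1)
  rw [hL]
  exact tendsto_order.2
    ⟨fun a ha => eventually_lt_div_sSup_image_add_mul_sub hK hh hgM hpK hpM ht hF ha,
      fun b hb => eventually_div_sSup_image_add_mul_sub_lt hK hne hg hh hgM
        (fun x hx hgx => hpmax x ⟨hx, hgx⟩) ht ht0 hF hb⟩

theorem stmt17_general (g h : ℝ → ℝ) (hg : ContinuousOn g (Set.Icc 0 1))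
    (hh : ContinuousOn h (Set.Icc 0 1))
    (t : ℕ → ℝ) (ht : ∀ n, 0 < t n)
    (ht0 : Filter.Tendsto t Filter.atTop (nhds 0))
    (hn : ℕ → ℝ → ℝ)
    (hunif : TendstoUniformlyOn hn h Filter.atTop (Set.Icc 0 1)) :
    Filter.Tendsto (fun n =>
        (sSup ((fun p => g p + t n * hn n p) '' Set.Icc (0 : ℝ) 1) -
          sSup (g '' Set.Icc (0 : ℝ) 1)) / t n) Filter.atTop
      (nhds (sSup (h '' {p ∈ Set.Icc (0 : ℝ) 1 | g p = sSup (g '' Set.Icc (0 : ℝ) 1)}))) :=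
  isCompact_Icc.tendsto_sSup_image_add_mul_sub_div (nonempty_Icc.2 zero_le_one) hg hh ht ht0
    hunif

theorem stmt17 (g h : ℝ → ℝ) (hg : ContinuousOn g (Set.Icc 0 1))
    (hh : ContinuousOn h (Set.Icc 0 1))
    (t : ℕ → ℝ) (ht : ∀ n, 0 < t n)
    (ht0 : Filter.Tendsto t Filter.atTop (nhds 0))
    (hn : ℕ → ℝ → ℝ) (hhn : ∀ n, ContinuousOn (hn n) (Set.Icc 0 1))
    (hunif : TendstoUniformlyOn hn h Filter.atTop (Set.Icc 0 1)) :
    Filter.Tendsto (fun n =>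
        (sSup ((fun p => g p + t n * hn n p) '' Set.Icc (0 : ℝ) 1) -
          sSup (g '' Set.Icc (0 : ℝ) 1)) / t n) Filter.atTop
      (nhds (sSup (h '' {p ∈ Set.Icc (0 : ℝ) 1 | g p = sSup (g '' Set.Icc (0 : ℝ) 1)}))) :=
  stmt17_general g h hg hh t ht ht0 hn hunif
end
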